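/- Let β > 0, d ≥ 1, and let c₁, …, c_d be positive real numbers. Define Φ : 𝔻^d → ℂ by Φ(z) = 1/2 + ∑_{j=1}^d c_j (1 − z_j), and let m̃_β^{⊗d} denote the d-fold product of the measure m̃_β on 𝔻^d. Then there exist constants c > 0 and ε₀ > 0 such that for every 0 < ε < ε₀, m̃_β^{⊗d}({z ∈ 𝔻^d : Φ(z) ∈ Q(0,ε)}) ≥ c · ε^{1/2 + d(1/2 + β)}. -/

import Mathlib

open MeasureTheory

/-- The probability measure on the open unit disc with density `β(1-|z|²)^{β-1}` with
respect to the area measure normalized so that the unit disc has measure 1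
(i.e. Lebesgue measure divided by `π`). -/
noncomputable def mB (β : ℝ) : Measure ℂ :=
  (volume.restrict {z : ℂ | ‖z‖ < 1}).withDensity
    (fun z => ENNReal.ofReal (β * (1 - ‖z‖ ^ 2) ^ (β - 1) / Real.pi))

/-- The Carleson square `Q(τ,ε)` in the half-plane `Re s > 1/2`. -/
def Qset (τ ε : ℝ) : Set ℂ :=
  {s : ℂ | 1/2 ≤ s.re ∧ s.re ≤ 1/2 + ε ∧ |s.im - τ| ≤ ε / 2}

/-!
Put every coordinate in a box with real part in `[1 - 4ρ², 1 - 2ρ²]` and imaginary part in an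
interval `[a, b] ⊆ [-ρ, ρ]`, where `ρ ≍ √ε`. On such a box `1 - |z|² ≍ ρ²`, so the density of
`m̃_β` is `≍ ρ^{2(β-1)}` and the box has measure `≍ ρ^{2β} (b - a)`, while `Re Φ ∈ [1/2, 1/2 + ε]`.
The last `d - 1` coordinates get imaginary parts in intervals of length `≍ √ε`; for each choice
of them, the imaginary part of the first coordinate ranges over a window of length `≍ ε` that
compensates their contribution, so that `|Im Φ| ≤ ε / 2`. By Fubini the measure is
`≳ ε^β · ε · (ε^β · √ε)^{d-1} = ε^{1/2 + d(1/2 + β)}`.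
-/

open Set Complex

theorem Real.min_rpow_mul_rpow_le_rpow {a b r x : ℝ} (ha : 0 < a) (hr : 0 < r)
    (hax : a * r ≤ x) (hxb : x ≤ b * r) (p : ℝ) : min (a ^ p) (b ^ p) * r ^ p ≤ x ^ p := by
  rcases le_total 0 p with hp | hp
  · calc min (a ^ p) (b ^ p) * r ^ p ≤ a ^ p * r ^ p := by gcongr; exact min_le_left _ _
      _ = (a * r) ^ p := (Real.mul_rpow ha.le hr.le).symm
      _ ≤ x ^ p := Real.rpow_le_rpow (by positivity) hax hp
  · calc min (a ^ p) (b ^ p) * r ^ p ≤ b ^ p * r ^ p := by gcongr; exact min_le_right _ _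
      _ = (b * r) ^ p := (Real.mul_rpow (by nlinarith) hr.le).symm
      _ ≤ x ^ p := Real.rpow_le_rpow_of_nonpos ((mul_pos ha hr).trans_le hax) hxb hp

theorem Real.rpow_half_add_succ_mul {ε : ℝ} (hε : 0 < ε) (β : ℝ) (n : ℕ) :
    ε ^ ((1 : ℝ) / 2 + ((n + 1 : ℕ) : ℝ) * (1 / 2 + β)) = ε ^ β * ε * (ε ^ β * √ε) ^ n := by
  rw [Real.sqrt_eq_rpow, ← Real.rpow_add hε, ← Real.rpow_add_one hε.ne', ← Real.rpow_natCast,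
    ← Real.rpow_mul hε.le, ← Real.rpow_add hε]
  push_cast
  ring_nf

theorem Complex.volume_reProdIm (s t : Set ℝ) : volume (s ×ℂ t) = volume s * volume t := by
  rw [← show measurableEquivRealProd ⁻¹' s ×ˢ t = s ×ℂ t from rfl,
    volume_preserving_equiv_real_prod.measure_preimage_equiv, Measure.volume_eq_prod,
    Measure.prod_prod]

theorem isClosed_Qset (τ ε : ℝ) : IsClosed (Qset τ ε) :=
  (isClosed_le continuous_const continuous_re).inter <|
    (isClosed_le continuous_re continuous_const).inter <|
      isClosed_le (continuous_im.sub continuous_const).abs continuous_const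

theorem MeasureTheory.Measure.mul_le_pi_of_le_measure_cons {α : Type*} [MeasurableSpace α]
    {n : ℕ} (μ : Measure α) [SigmaFinite μ] {S : Set (Fin (n + 1) → α)} (hS : MeasurableSet S)
    {P : Set (Fin n → α)} {a : ENNReal} (h : ∀ y ∈ P, a ≤ μ {x | Fin.cons x y ∈ S}) :
    a * Measure.pi (fun _ => μ) P ≤ Measure.pi (fun _ => μ) S := by
  set e := MeasurableEquiv.piFinSuccAbove (fun _ : Fin (n + 1) => α) 0
  have he : MeasurableSet (e.symm ⁻¹' S) := e.symm.measurable hS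
  have hslice (y : Fin n → α) :
      (fun x => (x, y)) ⁻¹' (e.symm ⁻¹' S) = {x | Fin.cons x y ∈ S} := by
    ext x
    simp [e, Fin.insertNthEquiv, Fin.insertNth_zero']
  rw [← ((measurePreserving_piFinSuccAbove (fun _ => μ) 0).symm e).measure_preimage_equiv,
    Measure.prod_apply_symm he]
  calc a * Measure.pi (fun _ => μ) P
      ≤ a * Measure.pi (fun _ => μ) {y | a ≤ μ ((fun x => (x, y)) ⁻¹' (e.symm ⁻¹' S))} := by
        gcongr
        intro y hy
        change a ≤ μ _
        rw [hslice]
        exact h y hy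
    _ ≤ _ := mul_meas_ge_le_lintegral₀ (measurable_measure_prodMk_right he).aemeasurable a

instance (β : ℝ) : SigmaFinite (mB β) := by
  unfold mB; infer_instance

theorem ofReal_mul_volume_le_mB {β k : ℝ} {s : Set ℂ} (hs : MeasurableSet s)
    (hs_disc : ∀ z ∈ s, ‖z‖ < 1) (hk : ∀ z ∈ s, k ≤ β * (1 - ‖z‖ ^ 2) ^ (β - 1) / Real.pi) :
    ENNReal.ofReal k * volume s ≤ mB β s := by
  rw [mB, withDensity_apply _ hs, Measure.restrict_restrict hs,
    inter_eq_self_of_subset_left (show s ⊆ {z : ℂ | ‖z‖ < 1} from hs_disc), ← setLIntegral_const]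
  exact setLIntegral_mono' hs fun z hz => ENNReal.ofReal_le_ofReal (hk z hz)

def boundaryBox (ρ a b : ℝ) : Set ℂ := Icc (1 - 4 * ρ ^ 2) (1 - 2 * ρ ^ 2) ×ℂ Icc a b

theorem boundaryBox_mono {ρ a b a' b' : ℝ} (ha : a' ≤ a) (hb : b ≤ b') :
    boundaryBox ρ a b ⊆ boundaryBox ρ a' b' :=
  fun _ hz => ⟨hz.1, Icc_subset_Icc ha hb hz.2⟩

theorem one_sub_sq_norm_mem_Icc {ρ : ℝ} (hρ : 4 * ρ ^ 2 ≤ 1) {z : ℂ}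
    (hz : z ∈ boundaryBox ρ (-ρ) ρ) : ρ ^ 2 ≤ 1 - ‖z‖ ^ 2 ∧ 1 - ‖z‖ ^ 2 ≤ 8 * ρ ^ 2 := by
  obtain ⟨⟨hx₁, hx₂⟩, hy₁, hy₂⟩ := hz
  have hy : z.im ^ 2 ≤ ρ ^ 2 := sq_le_sq' hy₁ hy₂
  rw [Complex.sq_norm, Complex.normSq_apply]
  constructor <;> nlinarith [sq_nonneg z.im]

theorem norm_lt_one_of_mem_boundaryBox {ρ : ℝ} (hρ : 0 < ρ) (hρ₁ : 4 * ρ ^ 2 ≤ 1) {z : ℂ}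
    (hz : z ∈ boundaryBox ρ (-ρ) ρ) : ‖z‖ < 1 := by
  have := (one_sub_sq_norm_mem_Icc hρ₁ hz).1
  nlinarith [norm_nonneg z]

noncomputable def boxConst (β : ℝ) : ℝ := 2 * β * min 1 ((8 : ℝ) ^ (β - 1)) / Real.pi

theorem boxConst_pos {β : ℝ} (hβ : 0 < β) : 0 < boxConst β := by
  unfold boxConst
  have : 0 < min 1 ((8 : ℝ) ^ (β - 1)) := lt_min one_pos (by positivity)
  positivity

theorem ofReal_boxConst_le_mB {β ρ a b : ℝ} (hβ : 0 < β) (hρ : 0 < ρ) (hρ₁ : 4 * ρ ^ 2 ≤ 1)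
    (ha : -ρ ≤ a) (hb : b ≤ ρ) :
    ENNReal.ofReal (boxConst β * (ρ ^ 2) ^ β * (b - a)) ≤ mB β (boundaryBox ρ a b) := by
  unfold boxConst
  set m := min 1 ((8 : ℝ) ^ (β - 1))
  have hsub : boundaryBox ρ a b ⊆ boundaryBox ρ (-ρ) ρ := boundaryBox_mono ha hb
  have hk : ∀ z ∈ boundaryBox ρ a b,
      β * (m * (ρ ^ 2) ^ (β - 1)) / Real.pi ≤ β * (1 - ‖z‖ ^ 2) ^ (β - 1) / Real.pi := by
    intro z hz
    obtain ⟨hlow, hupp⟩ := one_sub_sq_norm_mem_Icc hρ₁ (hsub hz)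
    have := Real.min_rpow_mul_rpow_le_rpow one_pos (by positivity) (by linarith) hupp (β - 1)
    rw [Real.one_rpow] at this
    gcongr
  have hvol : volume (boundaryBox ρ a b)
      = ENNReal.ofReal (2 * ρ ^ 2) * ENNReal.ofReal (b - a) := by
    rw [boundaryBox, Complex.volume_reProdIm, Real.volume_Icc, Real.volume_Icc]
    ring_nf
  calc ENNReal.ofReal (2 * β * m / Real.pi * (ρ ^ 2) ^ β * (b - a))
      = ENNReal.ofReal (β * (m * (ρ ^ 2) ^ (β - 1)) / Real.pi) * volume (boundaryBox ρ a b) := by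
        have : 0 ≤ m := le_min zero_le_one (by positivity)
        rw [hvol, ← mul_assoc, ← ENNReal.ofReal_mul (by positivity),
          ← ENNReal.ofReal_mul (by positivity), Real.rpow_sub_one (by positivity)]
        congr 1
        field_simp
    _ ≤ mB β (boundaryBox ρ a b) :=
        ofReal_mul_volume_le_mB
          ((measurable_re measurableSet_Icc).inter (measurable_im measurableSet_Icc))
          (fun z hz => norm_lt_one_of_mem_boundaryBox hρ hρ₁ (hsub hz)) hk

theorem half_add_sum_mem_Qset {ι : Type*} [Fintype ι] {c : ι → ℝ} (hc : ∀ j, 0 ≤ c j)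
    {δ ε : ℝ} (hδ : δ * ∑ j, c j ≤ ε) {z : ι → ℂ} (hre : ∀ j, (z j).re ∈ Icc (1 - δ) 1)
    (him : |∑ j, c j * (z j).im| ≤ ε / 2) :
    (1 / 2 : ℂ) + ∑ j, (c j : ℂ) * (1 - z j) ∈ Qset 0 ε := by
  have hre_sum : ((1 / 2 : ℂ) + ∑ j, (c j : ℂ) * (1 - z j)).re
      = 1 / 2 + ∑ j, c j * (1 - (z j).re) := by
    simp
  have him_sum : ((1 / 2 : ℂ) + ∑ j, (c j : ℂ) * (1 - z j)).im = -∑ j, c j * (z j).im := by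
    simp
  have hsum_nonneg : 0 ≤ ∑ j, c j * (1 - (z j).re) :=
    Finset.sum_nonneg fun j _ => mul_nonneg (hc j) (sub_nonneg.2 (hre j).2)
  have hsum_le : ∑ j, c j * (1 - (z j).re) ≤ ε :=
    calc ∑ j, c j * (1 - (z j).re) ≤ ∑ j, c j * δ :=
          Finset.sum_le_sum fun j _ => mul_le_mul_of_nonneg_left (by linarith [(hre j).1]) (hc j)
      _ = δ * ∑ j, c j := by rw [← Finset.sum_mul, mul_comm]
      _ ≤ ε := hδ
  refine ⟨?_, ?_, ?_⟩
  · rw [hre_sum]; linarith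
  · rw [hre_sum]; linarith
  · rwa [him_sum, sub_zero, abs_neg]

theorem measurableSet_setOf_norm_lt_one_and_mem_Qset {ι : Type*} [Fintype ι] (c : ι → ℝ)
    (ε : ℝ) : MeasurableSet {z : ι → ℂ | (∀ j, ‖z j‖ < 1) ∧
      ((1 / 2 : ℂ) + ∑ j, (c j : ℂ) * (1 - z j)) ∈ Qset 0 ε} := by
  have hopen : IsOpen {z : ι → ℂ | ∀ j, ‖z j‖ < 1} := by
    rw [ofPred_forall]
    exact isOpen_iInter_of_finite fun j => isOpen_lt (by fun_prop) continuous_const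
  exact hopen.measurableSet.inter ((isClosed_Qset 0 ε).preimage (by fun_prop)).measurableSet

theorem forall_norm_lt_one_and_mem_Qset {ι : Type*} [Fintype ι] {c : ι → ℝ}
    (hc : ∀ j, 0 ≤ c j) {ρ ε : ℝ} (hρ : 0 < ρ) (hρ₁ : 4 * ρ ^ 2 ≤ 1)
    (hρε : 4 * ρ ^ 2 * ∑ j, c j ≤ ε) {z : ι → ℂ} (hz : ∀ j, z j ∈ boundaryBox ρ (-ρ) ρ)
    (him : |∑ j, c j * (z j).im| ≤ ε / 2) :
    (∀ j, ‖z j‖ < 1) ∧ (1 / 2 : ℂ) + ∑ j, (c j : ℂ) * (1 - z j) ∈ Qset 0 ε :=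
  ⟨fun j => norm_lt_one_of_mem_boundaryBox hρ hρ₁ (hz j),
    half_add_sum_mem_Qset hc hρε (fun j => ⟨(hz j).1.1, by linarith [(hz j).1.2, sq_nonneg ρ]⟩)
      him⟩

section Slices

variable {β : ℝ} {n : ℕ} {c : Fin (n + 1) → ℝ} {ρ h ε : ℝ}

theorem ofReal_boxConst_le_mB_slice (hβ : 0 < β) (hc : ∀ j, 0 < c j) (hρ : 0 < ρ)
    (hρ₁ : 4 * ρ ^ 2 ≤ 1) (hρε : 4 * ρ ^ 2 * ∑ j, c j ≤ ε) (hh₀ : 0 ≤ h) (hhρ : h ≤ ρ)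
    (hhε : (∑ j, c j) * h + ε / 2 ≤ c 0 * ρ) {y : Fin n → ℂ}
    (hy : ∀ j, y j ∈ boundaryBox ρ 0 h) :
    ENNReal.ofReal (boxConst β * (ρ ^ 2) ^ β * (ε / (2 * c 0))) ≤
      mB β {x | (Fin.cons x y : Fin (n + 1) → ℂ) ∈ {z : Fin (n + 1) → ℂ | (∀ j, ‖z j‖ < 1) ∧
        ((1 / 2 : ℂ) + ∑ j, (c j : ℂ) * (1 - z j)) ∈ Qset 0 ε}} := by
  set S := ∑ j, c j.succ * (y j).im
  have hS₀ : 0 ≤ S := Finset.sum_nonneg fun j _ => mul_nonneg (hc _).le (hy j).2.1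
  have hSh : S ≤ (∑ j, c j) * h :=
    calc S ≤ ∑ j, c j.succ * h :=
          Finset.sum_le_sum fun j _ => mul_le_mul_of_nonneg_left (hy j).2.2 (hc _).le
      _ ≤ (∑ j, c j) * h := by
          rw [← Finset.sum_mul, Fin.sum_univ_succ]
          nlinarith [hc 0]
  have hlo : -ρ ≤ (-S - ε / 2) / c 0 := by rw [le_div_iff₀ (hc 0)]; linarith
  have hhi : -S / c 0 ≤ ρ := by rw [div_le_iff₀ (hc 0)]; nlinarith [hc 0]
  have hwidth : -S / c 0 - (-S - ε / 2) / c 0 = ε / (2 * c 0) := by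
    field_simp [(hc 0).ne']
    ring
  rw [← hwidth]
  refine (ofReal_boxConst_le_mB hβ hρ hρ₁ hlo hhi).trans (measure_mono fun x hx => ?_)
  refine forall_norm_lt_one_and_mem_Qset (fun j => (hc j).le) hρ hρ₁ hρε
    (Fin.cases (boundaryBox_mono hlo hhi hx) fun j => boundaryBox_mono (by linarith) hhρ (hy j))
    ?_
  obtain ⟨-, hx₁, hx₂⟩ := hx
  rw [div_le_iff₀ (hc 0)] at hx₁
  rw [le_div_iff₀ (hc 0)] at hx₂
  rw [Fin.sum_univ_succ, abs_le]
  simp only [Fin.cons_zero, Fin.cons_succ]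
  constructor <;> nlinarith

theorem ofReal_mul_pow_le_pi_mB (hβ : 0 < β) (hc : ∀ j, 0 < c j) (hρ : 0 < ρ)
    (hρ₁ : 4 * ρ ^ 2 ≤ 1) (hρε : 4 * ρ ^ 2 * ∑ j, c j ≤ ε) (hh₀ : 0 ≤ h) (hhρ : h ≤ ρ)
    (hhε : (∑ j, c j) * h + ε / 2 ≤ c 0 * ρ) :
    ENNReal.ofReal (boxConst β * (ρ ^ 2) ^ β * (ε / (2 * c 0))) *
        ENNReal.ofReal (boxConst β * (ρ ^ 2) ^ β * h) ^ n ≤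
      Measure.pi (fun _ => mB β) {z : Fin (n + 1) → ℂ | (∀ j, ‖z j‖ < 1) ∧
        ((1 / 2 : ℂ) + ∑ j, (c j : ℂ) * (1 - z j)) ∈ Qset 0 ε} :=
  calc _ ≤ ENNReal.ofReal (boxConst β * (ρ ^ 2) ^ β * (ε / (2 * c 0))) *
          Measure.pi (fun _ => mB β) (univ.pi fun _ => boundaryBox ρ 0 h) := by
        rw [Measure.pi_pi, Finset.prod_const, Finset.card_univ, Fintype.card_fin]
        gcongr
        simpa using ofReal_boxConst_le_mB hβ hρ hρ₁ (neg_nonpos.2 hρ.le) hhρ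
    _ ≤ _ := Measure.mul_le_pi_of_le_measure_cons _
        (measurableSet_setOf_norm_lt_one_and_mem_Qset c ε) fun y hy =>
          ofReal_boxConst_le_mB_slice hβ hc hρ hρ₁ hρε hh₀ hhρ hhε fun j => hy j trivial

end Slices

/- For `ε = (2Kρ)²` the hypotheses of `ofReal_mul_pow_le_pi_mB` hold with `h = c₀ρ/(2K)` as soon
as `ρ ≤ c₀/(4K²)`, i.e. `ε ≤ (c₀/(2K))²`; both factors of its bound are then multiples of
powers of `ε`. -/
theorem ofReal_mul_rpow_le_pi_mB {β : ℝ} (hβ : 0 < β) {n : ℕ} {c : Fin (n + 1) → ℝ}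
    (hc : ∀ j, 0 < c j) {K ρ : ℝ} (hK : 1 + ∑ j, c j ≤ K) (hρ : 0 < ρ)
    (hρc : ρ * (4 * K ^ 2) ≤ c 0) :
    ENNReal.ofReal (boxConst β / ((2 * K) ^ 2) ^ β / (2 * c 0) *
        (boxConst β / ((2 * K) ^ 2) ^ β * (c 0 / (4 * K ^ 2))) ^ n *
        ((2 * K * ρ) ^ 2) ^ ((1 : ℝ) / 2 + ((n + 1 : ℕ) : ℝ) * (1 / 2 + β))) ≤
      Measure.pi (fun _ => mB β) {z : Fin (n + 1) → ℂ | (∀ j, ‖z j‖ < 1) ∧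
        ((1 / 2 : ℂ) + ∑ j, (c j : ℂ) * (1 - z j)) ∈ Qset 0 ((2 * K * ρ) ^ 2)} := by
  set C := ∑ j, c j
  have hc₀ := hc 0
  have hc₀C : c 0 ≤ C := Finset.single_le_sum (fun j _ => (hc j).le) (Finset.mem_univ 0)
  have hK₀ : 0 < K := by linarith
  have hρ4 : 4 * ρ ≤ 1 := by nlinarith
  have hCK : C ≤ K ^ 2 := by nlinarith
  have hκ := boxConst_pos hβ
  set P := ((2 * K) ^ 2) ^ β
  have hP : 0 < P := by positivity
  have hpow : ((2 * K * ρ) ^ 2) ^ β = P * (ρ ^ 2) ^ β := by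
    rw [mul_pow _ ρ, Real.mul_rpow (by positivity) (by positivity)]
  have e₁ : boxConst β / P / (2 * c 0) * (P * (ρ ^ 2) ^ β * (2 * K * ρ) ^ 2)
      = boxConst β * (ρ ^ 2) ^ β * ((2 * K * ρ) ^ 2 / (2 * c 0)) := by
    field_simp
  have e₂ : boxConst β / P * (c 0 / (4 * K ^ 2)) * (P * (ρ ^ 2) ^ β * (2 * K * ρ))
      = boxConst β * (ρ ^ 2) ^ β * (c 0 * ρ / (2 * K)) := by
    field_simp
    ring
  have hh : c 0 * ρ / (2 * K) ≤ ρ := by rw [div_le_iff₀ (by positivity)]; nlinarith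
  have hhε : C * (c 0 * ρ / (2 * K)) + (2 * K * ρ) ^ 2 / 2 ≤ c 0 * ρ := by
    have : C * (c 0 * ρ / (2 * K)) ≤ c 0 * ρ / 2 := by
      rw [mul_div_assoc', div_le_div_iff₀ (by positivity) (by positivity)]
      nlinarith [mul_pos hc₀ hρ]
    nlinarith
  calc _ = ENNReal.ofReal (boxConst β * (ρ ^ 2) ^ β * ((2 * K * ρ) ^ 2 / (2 * c 0))) *
        ENNReal.ofReal (boxConst β * (ρ ^ 2) ^ β * (c 0 * ρ / (2 * K))) ^ n := by
        rw [← ENNReal.ofReal_pow (by positivity), ← ENNReal.ofReal_mul (by positivity),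
          Real.rpow_half_add_succ_mul (by positivity), Real.sqrt_sq (by positivity), hpow,
          ← e₁, ← e₂, mul_mul_mul_comm, ← mul_pow]
    _ ≤ _ := by
      refine ofReal_mul_pow_le_pi_mB hβ hc hρ ?_ ?_ (by positivity) hh hhε
      all_goals nlinarith

theorem stmt16 (β : ℝ) (hβ : 0 < β) (d : ℕ) (hd : 1 ≤ d) (c : Fin d → ℝ)
    (hc : ∀ j, 0 < c j) :
    ∃ c₀ ε₀ : ℝ, 0 < c₀ ∧ 0 < ε₀ ∧ ∀ ε : ℝ, 0 < ε → ε < ε₀ →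
      ENNReal.ofReal (c₀ * ε ^ ((1 : ℝ) / 2 + d * (1/2 + β))) ≤
        Measure.pi (fun _ : Fin d => mB β)
          {z : Fin d → ℂ | (∀ j, ‖z j‖ < 1) ∧
            ((1/2 : ℂ) + ∑ j, (c j : ℂ) * (1 - z j)) ∈ Qset 0 ε} := by
  obtain ⟨n, rfl⟩ : ∃ n, d = n + 1 := ⟨d - 1, by omega⟩
  set K := 1 + ∑ j, c j
  have hK : 0 < K := add_pos_of_pos_of_nonneg one_pos (Finset.sum_nonneg fun j _ => (hc j).le)
  have hκ := boxConst_pos hβ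
  have hc₀ := hc 0
  refine ⟨boxConst β / ((2 * K) ^ 2) ^ β / (2 * c 0) *
      (boxConst β / ((2 * K) ^ 2) ^ β * (c 0 / (4 * K ^ 2))) ^ n, (c 0 / (2 * K)) ^ 2,
    by positivity, by positivity, fun ε hε hε₀ => ?_⟩
  obtain ⟨ρ, hρ, rfl⟩ : ∃ ρ > 0, ε = (2 * K * ρ) ^ 2 :=
    ⟨√ε / (2 * K), by positivity,
      by rw [mul_div_cancel₀ _ (by positivity : 2 * K ≠ 0), Real.sq_sqrt hε.le]⟩
  have hρc : 2 * K * ρ < c 0 / (2 * K) :=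
    (pow_lt_pow_iff_left₀ (by positivity) (by positivity) two_ne_zero).1 hε₀
  rw [lt_div_iff₀ (by positivity)] at hρc
  exact ofReal_mul_rpow_le_pi_mB hβ hc le_rfl hρ (by linarith)
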